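/- For the multicalibration boosting dynamics with unit rescaling weights, assume the projector map is Lipschitz along the trajectory: ‖A(f_t) − A(f_{t−1})‖₂ ≤ L_A ‖f_t − f_{t−1}‖₂ for all t ≥ 1, where L_A ≥ 0. Let κ = 1 − η + η L_A ‖y − f₀‖₂. Then for every t ≥ 1, ‖f_{t+1} − f_t‖₂ ≤ κ ‖f_t − f_{t−1}‖₂. -/

import Mathlib

/-!
Write `r_t = y - f_t`, so that `r_{t+1} = r_t - η A(f_t) r_t`. For an orthogonal projection `P`
and `0 ≤ η ≤ 2`, `‖r - η P r‖² = ‖r‖² - η (2 - η) ‖P r‖²`, so the residuals never grow and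
`‖r_t‖ ≤ ‖r_0‖`. Idempotence gives `A(f_t) r_{t+1} = (1 - η) A(f_t) r_t`, hence
`f_{t+2} - f_{t+1} = (1 - η) (f_{t+1} - f_t) + η (A(f_{t+1}) - A(f_t)) r_{t+1}`,
and the Lipschitz bound together with `‖r_{t+1}‖ ≤ ‖r_0‖` controls the second term.
-/

open Matrix
open scoped Matrix.Norms.L2Operator

/-- The action of a real matrix on vectors of `EuclideanSpace`. -/
noncomputable def mulVecE {m n : Type*} [Fintype m] [Fintype n] [DecidableEq n]
    (A : Matrix m n ℝ) (v : EuclideanSpace ℝ n) : EuclideanSpace ℝ m :=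
  Matrix.toEuclideanLin A v

namespace LinearMap.IsSymmetricProjection

variable {E : Type*} [NormedAddCommGroup E] [InnerProductSpace ℝ E] {p : E →ₗ[ℝ] E}

theorem real_inner_self_apply (hp : p.IsSymmetricProjection) (x : E) :
    inner ℝ x (p x) = ‖p x‖ ^ 2 :=
  calc inner ℝ x (p x) = inner ℝ x (p (p x)) := by
        rw [← Module.End.mul_apply, hp.isIdempotentElem.eq]
    _ = ‖p x‖ ^ 2 := by rw [← hp.isSymmetric, real_inner_self_eq_norm_sq]

theorem norm_sub_smul_apply_le (hp : p.IsSymmetricProjection) {η : ℝ} (hη0 : 0 ≤ η)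
    (hη2 : η ≤ 2) (x : E) : ‖x - η • p x‖ ≤ ‖x‖ := by
  have hsq : ‖x - η • p x‖ ^ 2 = ‖x‖ ^ 2 - η * (2 - η) * ‖p x‖ ^ 2 := by
    rw [norm_sub_sq_real, real_inner_smul_right, hp.real_inner_self_apply, norm_smul,
      Real.norm_eq_abs, mul_pow, sq_abs]
    ring
  refine (pow_le_pow_iff_left₀ (norm_nonneg _) (norm_nonneg _) two_ne_zero).mp ?_
  rw [hsq]
  have : 0 ≤ η * (2 - η) * ‖p x‖ ^ 2 := by have := sub_nonneg.mpr hη2; positivity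
  linarith

end LinearMap.IsSymmetricProjection

theorem Matrix.isSymmetricProjection_toEuclideanLin {𝕜 n : Type*} [RCLike 𝕜] [Fintype n]
    [DecidableEq n] {A : Matrix n n 𝕜} (hA : A.IsHermitian) (hA' : IsIdempotentElem A) :
    (toEuclideanLin A).IsSymmetricProjection where
  isIdempotentElem :=
    ContinuousLinearMap.IsIdempotentElem.toLinearMap (hA'.map (toEuclideanCLM (n := n) (𝕜 := 𝕜)))
  isSymmetric := isSymmetric_toEuclideanLin_iff.mpr hA

section BoostingDynamics

variable {E : Type*} [NormedAddCommGroup E] [InnerProductSpace ℝ E]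

def IsBoostingTrajectory (y : E) (η : ℝ) (P : E → E →L[ℝ] E) (f : ℕ → E) : Prop :=
  ∀ t, f (t + 1) = f t + η • P (f t) (y - f t)

namespace IsBoostingTrajectory

variable {y : E} {η : ℝ} {P : E → E →L[ℝ] E} {f : ℕ → E}

theorem residual_succ (hf : IsBoostingTrajectory y η P f) (t : ℕ) :
    y - f (t + 1) = (y - f t) - η • P (f t) (y - f t) := by
  rw [hf t]; abel

theorem norm_residual_le (hf : IsBoostingTrajectory y η P f)
    (hP : ∀ g, (P g : E →ₗ[ℝ] E).IsSymmetricProjection) (hη0 : 0 ≤ η) (hη2 : η ≤ 2) (t : ℕ) :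
    ‖y - f t‖ ≤ ‖y - f 0‖ := by
  refine antitone_nat_of_succ_le (f := fun t ↦ ‖y - f t‖) (fun s ↦ ?_) (Nat.zero_le t)
  rw [hf.residual_succ]
  exact (hP (f s)).norm_sub_smul_apply_le hη0 hη2 _

theorem gap_succ (hf : IsBoostingTrajectory y η P f) (hP : ∀ g, IsIdempotentElem (P g))
    (t : ℕ) :
    f (t + 2) - f (t + 1) =
      (1 - η) • (f (t + 1) - f t) + η • (P (f (t + 1)) - P (f t)) (y - f (t + 1)) := by
  have hgap : ∀ s, f (s + 1) - f s = η • P (f s) (y - f s) := fun s ↦ by rw [hf s]; abel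
  have hPt : P (f t) (y - f (t + 1)) = (1 - η) • P (f t) (y - f t) := by
    rw [hf.residual_succ, map_sub, map_smul, ← mul_apply_eq_comp, (hP _).eq]
    module
  rw [_root_.sub_apply, hgap (t + 1), hgap t, hPt]
  module

theorem norm_gap_succ_le (hf : IsBoostingTrajectory y η P f)
    (hP : ∀ g, (P g : E →ₗ[ℝ] E).IsSymmetricProjection) (hη0 : 0 ≤ η) (hη1 : η ≤ 1) {L : ℝ}
    (hLip : ∀ t, ‖P (f (t + 1)) - P (f t)‖ ≤ L * ‖f (t + 1) - f t‖) (t : ℕ) :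
    ‖f (t + 2) - f (t + 1)‖ ≤ (1 - η + η * L * ‖y - f 0‖) * ‖f (t + 1) - f t‖ := by
  have hdrift : ‖(P (f (t + 1)) - P (f t)) (y - f (t + 1))‖
      ≤ L * ‖f (t + 1) - f t‖ * ‖y - f 0‖ :=
    (ContinuousLinearMap.le_opNorm _ _).trans <|
      mul_le_mul (hLip t) (hf.norm_residual_le hP hη0 (by linarith) _) (norm_nonneg _)
        ((norm_nonneg _).trans (hLip t))
  calc ‖f (t + 2) - f (t + 1)‖
      ≤ ‖(1 - η) • (f (t + 1) - f t)‖ + ‖η • (P (f (t + 1)) - P (f t)) (y - f (t + 1))‖ := by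
        rw [hf.gap_succ fun g ↦
          ContinuousLinearMap.isIdempotentElem_toLinearMap_iff.mp (hP g).isIdempotentElem]
        exact norm_add_le _ _
    _ ≤ (1 - η) * ‖f (t + 1) - f t‖ + η * (L * ‖f (t + 1) - f t‖ * ‖y - f 0‖) := by
        rw [norm_smul_of_nonneg (sub_nonneg.mpr hη1), norm_smul_of_nonneg hη0]
        gcongr
    _ = (1 - η + η * L * ‖y - f 0‖) * ‖f (t + 1) - f t‖ := by ring

end IsBoostingTrajectory

end BoostingDynamics

theorem multicalibration_boosting_linear_rate_general
    {n : ℕ} (y : EuclideanSpace ℝ (Fin n)) (η : ℝ) (hη0 : 0 < η) (hη1 : η ≤ 1)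
    (A : EuclideanSpace ℝ (Fin n) → Matrix (Fin n) (Fin n) ℝ)
    (hAsymm : ∀ f, (A f)ᵀ = A f) (hAproj : ∀ f, A f * A f = A f)
    (f : ℕ → EuclideanSpace ℝ (Fin n))
    (hf : ∀ t, f (t + 1) = f t + η • mulVecE (A (f t)) (y - f t))
    (L_A : ℝ)
    (hLip : ∀ t : ℕ, ‖A (f (t + 1)) - A (f t)‖ ≤ L_A * ‖f (t + 1) - f t‖) :
    ∀ t : ℕ,
      ‖f (t + 2) - f (t + 1)‖ ≤
        (1 - η + η * L_A * ‖y - f 0‖) * ‖f (t + 1) - f t‖ := by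
  have hP : ∀ g, (toEuclideanLin (A g)).IsSymmetricProjection := fun g ↦
    isSymmetricProjection_toEuclideanLin
      ((conjTranspose_eq_transpose_of_trivial _).trans (hAsymm g)) (hAproj g)
  refine IsBoostingTrajectory.norm_gap_succ_le (P := fun g ↦ toEuclideanCLM (𝕜 := ℝ) (A g))
    hf hP hη0.le hη1 fun t ↦ ?_
  rw [← map_sub, l2_opNorm_toEuclideanCLM]
  exact hLip t

/-- **Linear convergence of gaps under Lipschitz projectors.**
For the dynamics `f_{t+1} = f_t + η A(f_t)(y - f_t)` with orthogonal projections `A(f)`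
and `η ∈ (0,1]`, if `‖A(f_t) - A(f_{t-1})‖₂ ≤ L_A ‖f_t - f_{t-1}‖₂` along the trajectory
(here stated at indices `t+1, t` for all `t ≥ 0`, i.e. all `t ≥ 1` in original numbering),
then with `κ = 1 - η + η L_A ‖y - f₀‖₂` we have
`‖f_{t+1} - f_t‖₂ ≤ κ ‖f_t - f_{t-1}‖₂` for every `t ≥ 1`. -/
theorem multicalibration_boosting_linear_rate
    {n : ℕ} (y : EuclideanSpace ℝ (Fin n)) (η : ℝ) (hη0 : 0 < η) (hη1 : η ≤ 1)
    (A : EuclideanSpace ℝ (Fin n) → Matrix (Fin n) (Fin n) ℝ)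
    (hAsymm : ∀ f, (A f)ᵀ = A f) (hAproj : ∀ f, A f * A f = A f)
    (f : ℕ → EuclideanSpace ℝ (Fin n))
    (hf : ∀ t, f (t + 1) = f t + η • mulVecE (A (f t)) (y - f t))
    (L_A : ℝ) (hLA : 0 ≤ L_A)
    (hLip : ∀ t : ℕ, ‖A (f (t + 1)) - A (f t)‖ ≤ L_A * ‖f (t + 1) - f t‖) :
    ∀ t : ℕ,
      ‖f (t + 2) - f (t + 1)‖ ≤
        (1 - η + η * L_A * ‖y - f 0‖) * ‖f (t + 1) - f t‖ :=
  multicalibration_boosting_linear_rate_general y η hη0 hη1 A hAsymm hAproj f hf L_A hLip
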